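/- arXiv:math/0001179 — 2 statements merged into one kernel-verified Lean document; each statement's English description precedes it below -/
import Mathlib

section
/- Let A ⊆ B be (possibly noncommutative, associative) algebras over a field k, and let ε : B → A be an algebra homomorphism with ε(a) = a for all a ∈ A. Let I = ker ε and let J ⊆ A be a two-sided ideal of A. Write ⟨J⟩ for the two-sided ideal of B generated by J. Then for every n ≥ 1, ⟨J⟩^(n²+n−1) ⊆ ⟨Jⁿ⟩ + Iⁿ, where ⟨Jⁿ⟩ is the two-sided ideal of B generated by Jⁿ. -/
/-- Product of a list of elements in a (possibly non-unital) algebra;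
the empty product is set to `0` (it is never used below). -/
def mprod {R : Type*} [Mul R] [Zero R] : List R → R
  | [] => 0
  | [a] => a
  | a :: l => a * mprod l

/-- The set of `n`-fold products of elements of `s`. -/
def prodSet {R : Type*} [Mul R] [Zero R] (s : Set R) (n : ℕ) : Set R :=
  { x | ∃ l : List R, l.length = n ∧ (∀ y ∈ l, y ∈ s) ∧ x = mprod l }

/-!
Every `x ∈ ⟨J⟩` splits as `ε x + (x - ε x)` with `ε x ∈ J` and `x - ε x ∈ I`, so a product of
`N = n² + n - 1` elements of `⟨J⟩` is a sum of products of `N` factors, each in `J` or in `I`.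
If at least `n` factors lie in `I`, the product lies in `Iⁿ`, because `I` is an ideal. Otherwise
the at most `n - 1` factors from `I` cut the word into at most `n` runs of factors from `J` of total
length at least `n²`, so some run has length `n` and the product lies in `⟨Jⁿ⟩`.
-/

open Pointwise

namespace List

variable {α : Type*}

lemma exists_eq_append_cons_of_countP_pos {p : α → Bool} {l : List α} (h : 0 < l.countP p) :
    ∃ s x t, l = s ++ x :: t ∧ p x ∧ (∀ a ∈ s, p a = false) ∧ l.countP p = t.countP p + 1 := by
  obtain ⟨x, hx⟩ := Option.isSome_iff_exists.mp (find?_isSome.mpr (countP_pos_iff.mp h))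
  obtain ⟨hpx, s, t, rfl, hs⟩ := find?_eq_some_iff_append.mp hx
  have hs0 : s.countP p = 0 := countP_eq_zero.mpr fun a ha => by simpa using hs a ha
  refine ⟨s, x, t, rfl, hpx, fun a ha => by simpa using hs a ha, ?_⟩
  simp [hs0, hpx]

-- The `c` entries satisfying `p` cut `l` into `c + 1` runs of entries failing it.
lemma exists_isInfix_length_eq_of_countP (p : α → Bool) (n : ℕ) (l : List α)
    (hl : (l.countP p + 1) * n ≤ l.length) :
    ∃ m, m <:+: l ∧ m.length = n ∧ ∀ x ∈ m, p x = false := by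
  induction hL : l.length using Nat.strong_induction_on generalizing l with
  | _ L ih =>
  rcases Nat.eq_zero_or_pos (l.countP p) with h0 | hpos
  · refine ⟨l.take n, (take_prefix n l).isInfix, length_take_of_le (by simpa [h0] using hl),
      fun x hx => by simpa using countP_eq_zero.mp h0 x (mem_of_mem_take hx)⟩
  obtain ⟨s, x, t, rfl, -, hs, hcount⟩ := exists_eq_append_cons_of_countP_pos hpos
  by_cases hsn : n ≤ s.length
  · exact ⟨s.take n, (take_prefix n s).isInfix.trans (infix_append [] s (x :: t)),
      length_take_of_le hsn, fun y hy => hs y (mem_of_mem_take hy)⟩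
  have ht : (t.countP p + 1) * n ≤ t.length := by
    simp only [length_append, length_cons, hcount] at hl
    nlinarith
  obtain ⟨m, hm, hmn, hmp⟩ := ih t.length (by simp [← hL]; omega) t ht rfl
  exact ⟨m, hm.trans ⟨s ++ [x], [], by simp⟩, hmn, hmp⟩

end List

section Products

variable {R : Type*}

lemma mprod_cons [Mul R] [Zero R] (a : R) {l : List R} (hl : l ≠ []) :
    mprod (a :: l) = a * mprod l := by
  cases l with
  | nil => exact absurd rfl hl
  | cons b t => rfl

lemma mprod_append [Semigroup R] [Zero R] {l₁ l₂ : List R} (h₁ : l₁ ≠ []) (h₂ : l₂ ≠ []) :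
    mprod (l₁ ++ l₂) = mprod l₁ * mprod l₂ := by
  induction l₁ with
  | nil => exact absurd rfl h₁
  | cons a t ih =>
    rcases eq_or_ne t [] with rfl | ht
    · exact mprod_cons a h₂
    · rw [List.cons_append, mprod_cons a (by simp [ht]), mprod_cons a ht, ih ht, mul_assoc]

lemma prodSet_one [Mul R] [Zero R] (S : Set R) : prodSet S 1 = S := by
  ext x
  constructor
  · rintro ⟨l, hl, hS, rfl⟩
    obtain ⟨a, rfl⟩ := List.length_eq_one_iff.mp hl
    exact hS a (List.mem_singleton_self a)
  · exact fun hx => ⟨[x], rfl, by simpa using hx, rfl⟩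

lemma mul_mem_prodSet [Mul R] [Zero R] {S : Set R} {a b : R} {c : ℕ} (hc : c ≠ 0)
    (ha : a ∈ S) (hb : b ∈ prodSet S c) : a * b ∈ prodSet S (c + 1) := by
  obtain ⟨l, rfl, hl, rfl⟩ := hb
  exact ⟨a :: l, rfl, List.forall_mem_cons.mpr ⟨ha, hl⟩,
    (mprod_cons a (List.length_pos_iff.mp (Nat.pos_of_ne_zero hc))).symm⟩

lemma mprod_mem_closure_prodSet [NonUnitalNonAssocSemiring R] {S : Set R} :
    ∀ {l : List R}, l ≠ [] → (∀ y ∈ l, y ∈ AddSubmonoid.closure S) →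
      mprod l ∈ AddSubmonoid.closure (prodSet S l.length)
  | [], h, _ => absurd rfl h
  | [x], _, hl => by simpa [prodSet_one, mprod] using hl
  | x :: y :: t, _, hl => by
    have hyt := mprod_mem_closure_prodSet (List.cons_ne_nil y t) (List.forall_mem_cons.mp hl).2
    have hS : S * prodSet S (y :: t).length ⊆ prodSet S ((y :: t).length + 1) := by
      rintro _ ⟨a, ha, b, hb, rfl⟩
      exact mul_mem_prodSet (by simp) ha hb
    rw [mprod_cons x (List.cons_ne_nil y t)]
    exact AddSubmonoid.closure_mono hS
      (AddSubmonoid.closure_mul_closure S _ ▸ AddSubmonoid.mul_mem_mul (hl x (by simp)) hyt)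

variable [NonUnitalRing R]

lemma mprod_mem_of_isInfix (K : TwoSidedIdeal R) {m l : List R} (h : m <:+: l) (hm : m ≠ [])
    (hK : mprod m ∈ K) : mprod l ∈ K := by
  obtain ⟨s, t, rfl⟩ := h
  have hsm : mprod (s ++ m) ∈ K := by
    rcases eq_or_ne s [] with rfl | hs
    · simpa using hK
    · rw [mprod_append hs hm]
      exact K.mul_mem_left _ _ hK
  rcases eq_or_ne t [] with rfl | ht
  · simpa using hsm
  · rw [mprod_append (by simp [hm]) ht]
    exact K.mul_mem_right _ _ hsm

lemma mprod_mem_prodSet_of_le_countP (K : TwoSidedIdeal R) [DecidablePred (· ∈ K)] {c : ℕ}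
    (hc : 1 ≤ c) {l : List R} (hl : c ≤ l.countP (· ∈ K)) : mprod l ∈ prodSet (K : Set R) c := by
  induction c, hc using Nat.le_induction generalizing l with
  | base =>
    obtain ⟨s, x, t, rfl, hx, -, -⟩ := List.exists_eq_append_cons_of_countP_pos hl
    rw [prodSet_one]
    exact mprod_mem_of_isInfix K (List.infix_append' s [x] t) (List.cons_ne_nil x [])
      (by simpa [mprod] using hx)
  | succ c hc ih =>
    obtain ⟨s, x, t, rfl, hx, -, hcount⟩ :=
      List.exists_eq_append_cons_of_countP_pos ((Nat.succ_pos c).trans_le hl)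
    have htc : c ≤ t.countP (· ∈ K) := by omega
    have ht : t ≠ [] := by rintro rfl; simp at htc; omega
    have hsx : mprod (s ++ [x]) ∈ K :=
      mprod_mem_of_isInfix K ⟨s, [], List.append_nil _⟩ (List.cons_ne_nil x [])
        (by simpa [mprod] using hx)
    rw [show s ++ x :: t = (s ++ [x]) ++ t by simp, mprod_append (by simp) ht]
    exact mul_mem_prodSet (by omega) hsx (ih htc)

end Products

lemma prodSet_union_subset_sup {R : Type*} [NonUnitalRing R] (S : Set R) (K : TwoSidedIdeal R)
    {n N : ℕ} (hn : 1 ≤ n) (hN : n * n ≤ N) :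
    prodSet (S ∪ K) N ⊆ (TwoSidedIdeal.span (prodSet S n) ⊔ TwoSidedIdeal.span (prodSet K n) :
      TwoSidedIdeal R) := by
  classical
  rintro _ ⟨l, rfl, hl, rfl⟩
  by_cases hK : n ≤ l.countP (· ∈ K)
  · exact le_sup_right (α := TwoSidedIdeal R)
      (TwoSidedIdeal.subset_span (mprod_mem_prodSet_of_le_countP K hn hK))
  obtain ⟨m, hml, hmn, hmK⟩ := List.exists_isInfix_length_eq_of_countP (· ∈ K) n l
    ((Nat.mul_le_mul_right n (by omega)).trans hN)
  have hmS : ∀ x ∈ m, x ∈ S := fun x hx =>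
    (hl x (hml.subset hx)).resolve_right (by simpa using hmK x hx)
  have hm : m ≠ [] := by rintro rfl; simp at hmn; omega
  exact le_sup_left (α := TwoSidedIdeal R)
    (mprod_mem_of_isInfix _ hml hm (TwoSidedIdeal.subset_span ⟨m, hmn, hmS, rfl⟩))

lemma span_coe_subset_add_ker {k B : Type*} [CommRing k] [NonUnitalRing B] [Module k B]
    {A : NonUnitalSubalgebra k B} {ε : B →ₙₐ[k] A} (hε : ∀ a : A, ε (a : B) = a)
    (J : TwoSidedIdeal A) :
    ((TwoSidedIdeal.span ((↑) '' (J : Set A)) : TwoSidedIdeal B) : Set B) ⊆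
      ((↑) '' (J : Set A) : Set B) + (TwoSidedIdeal.ker ε : Set B) := by
  intro x hx
  have hεx : ε x ∈ J := by
    refine (TwoSidedIdeal.mem_comap ε).mp
      ((TwoSidedIdeal.span_le (I := TwoSidedIdeal.comap ε J)).mpr ?_ hx)
    rintro _ ⟨a, ha, rfl⟩
    simpa [TwoSidedIdeal.mem_comap, hε a] using ha
  refine ⟨(ε x : B), ⟨ε x, hεx, rfl⟩, x - (ε x : B), ?_, add_sub_cancel _ _⟩
  simp [TwoSidedIdeal.mem_ker, hε]

theorem stmt0_general {k : Type*} [Field k] {B : Type*} [NonUnitalRing B] [Module k B]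
    (A : NonUnitalSubalgebra k B) (ε : B →ₙₐ[k] A)
    (hε : ∀ a : A, ε (a : B) = a)
    (J : TwoSidedIdeal A) (n : ℕ) (hn : 1 ≤ n) :
    TwoSidedIdeal.span
        (prodSet ((TwoSidedIdeal.span ((↑) '' (J : Set A)) : TwoSidedIdeal B) : Set B)
          (n ^ 2 + n - 1))
      ≤ TwoSidedIdeal.span (prodSet ((↑) '' (J : Set A)) n)
          ⊔ TwoSidedIdeal.span (prodSet {b : B | ε b = 0} n) := by
  have hI : {b : B | ε b = 0} = (TwoSidedIdeal.ker ε : Set B) :=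
    Set.ext fun _ => (TwoSidedIdeal.mem_ker ε).symm
  rw [hI, TwoSidedIdeal.span_le]
  have hN : n * n ≤ n ^ 2 + n - 1 := by rw [sq]; omega
  rintro _ ⟨l, hlen, hl, rfl⟩
  have hl0 : l ≠ [] := List.ne_nil_of_length_pos (hlen ▸ (Nat.mul_pos hn hn).trans_le hN)
  have hcl := mprod_mem_closure_prodSet hl0 fun y hy => by
    obtain ⟨u, hu, v, hv, rfl⟩ := span_coe_subset_add_ker hε J (hl y hy)
    exact add_mem (AddSubmonoid.subset_closure (Or.inl hu))
      (AddSubmonoid.subset_closure (Or.inr hv))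
  rw [hlen] at hcl
  exact AddSubmonoid.closure_induction
    (prodSet_union_subset_sup _ _ hn hN) (zero_mem _)
    (fun _ _ _ _ => add_mem) hcl

/-- Lemma 2.3 of the paper: if `ε : B → A` is an algebra retraction onto the
subalgebra `A` with kernel `I`, and `J` is a two-sided ideal of `A`, then
`⟨J⟩^(n²+n−1) ⊆ ⟨Jⁿ⟩ + Iⁿ`. -/
theorem stmt0 {k : Type*} [Field k] {B : Type*} [NonUnitalRing B] [Module k B]
    [SMulCommClass k B B] [IsScalarTower k B B]
    (A : NonUnitalSubalgebra k B) (ε : B →ₙₐ[k] A)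
    (hε : ∀ a : A, ε (a : B) = a)
    (J : TwoSidedIdeal A) (n : ℕ) (hn : 1 ≤ n) :
    TwoSidedIdeal.span
        (prodSet ((TwoSidedIdeal.span ((↑) '' (J : Set A)) : TwoSidedIdeal B) : Set B)
          (n ^ 2 + n - 1))
      ≤ TwoSidedIdeal.span (prodSet ((↑) '' (J : Set A)) n)
          ⊔ TwoSidedIdeal.span (prodSet {b : B | ε b = 0} n) :=
  stmt0_general A ε hε J n hn
end

section
/- Let A be a k-algebra, B = ⊕_{i≥0} Bᵢ a graded k-algebra, and D₀ = u : A → B₀, D₁, …, Dₙ : A → Bᵢ linear maps satisfying Dᵢ(xy) = Σ_{j=0}^{i} Dⱼ(x)D_{i−j}(y) for all 0 ≤ i ≤ n and x, y ∈ A. Define the 2-cochain c : A × A → B_{n+1} by c(x, y) = Σ_{i=1}^{n} Dᵢ(x)·D_{n+1−i}(y). Then c is a Hochschild 2-cocycle for the A-bimodule structure on B_{n+1} induced by u, i.e., for all x, y, z ∈ A: u(x)·c(y, z) − c(xy, z) + c(x, yz) − c(x, y)·u(z) = 0. -/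
open Finset

/-!
Expanding `c(xy, z)` by the Leibniz rule for `D_i(xy)` and splitting off the `j = 0` terms gives
`u(x) c(y, z) + T`, and expanding `c(x, yz)` by the Leibniz rule for `D_{n+1-i}(yz)` and splitting
off the top terms gives `T + c(x, y) u(z)`, where `T` is the sum of `D_a(x) D_b(y) D_c(z)` over
`a + b + c = n + 1` with `a, c ≥ 1`. The coboundary is the difference of these two identities.
-/

namespace HochschildObstruction

variable {A B : Type*} [Mul A] [Ring B]

def cochain (D : ℕ → A → B) (n : ℕ) (x y : A) : B :=
  ∑ i ∈ Icc 1 n, D i x * D (n + 1 - i) y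

/-- The sum of `D a x * D b y * D c z` over `a + b + c = n + 1` with `a, c ≥ 1`. -/
def tripleSum (D : ℕ → A → B) (n : ℕ) (x y z : A) : B :=
  ∑ a ∈ Icc 1 n, ∑ b ∈ range (n + 1 - a), D a x * D b y * D (n + 1 - a - b) z

lemma sum_Icc_sum_range_reindex {M : Type*} [AddCommMonoid M] (f : ℕ → ℕ → ℕ → M)
    (n : ℕ) :
    ∑ i ∈ Icc 1 n, ∑ j ∈ range i, f (j + 1) (i - (j + 1)) (n + 1 - i)
      = ∑ a ∈ Icc 1 n, ∑ b ∈ range (n + 1 - a), f a b (n + 1 - a - b) := by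
  rw [sum_sigma', sum_sigma']
  refine sum_nbij' (fun p => ⟨p.2 + 1, p.1 - (p.2 + 1)⟩) (fun q => ⟨q.1 + q.2, q.1 - 1⟩)
    ?_ ?_ ?_ ?_ ?_ <;> rintro ⟨i, j⟩ h <;>
    simp only [mem_sigma, mem_Icc, mem_range, Sigma.mk.inj_iff, heq_eq_eq] at h ⊢ <;>
    first | omega | (congr 1; omega)

variable (D : ℕ → A → B) (n : ℕ)
  (hLeib : ∀ i ≤ n, ∀ x y : A, D i (x * y) = ∑ j ∈ range (i + 1), D j x * D (i - j) y)
include hLeib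

lemma cochain_mul_left (x y z : A) :
    cochain D n (x * y) z = D 0 x * cochain D n y z + tripleSum D n x y z := by
  have expand : ∀ i ∈ Icc 1 n, D i (x * y) * D (n + 1 - i) z
      = D 0 x * (D i y * D (n + 1 - i) z)
        + ∑ j ∈ range i, D (j + 1) x * D (i - (j + 1)) y * D (n + 1 - i) z := by
    intro i hi
    rw [hLeib i (mem_Icc.mp hi).2, sum_range_succ', add_mul, sum_mul, Nat.sub_zero, mul_assoc,
      add_comm]
  rw [cochain, sum_congr rfl expand, sum_add_distrib, ← mul_sum,
    sum_Icc_sum_range_reindex (fun a b c => D a x * D b y * D c z)]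
  rfl

lemma cochain_mul_right (x y z : A) :
    cochain D n x (y * z) = tripleSum D n x y z + cochain D n x y * D 0 z := by
  have expand : ∀ i ∈ Icc 1 n, D i x * D (n + 1 - i) (y * z)
      = ∑ j ∈ range (n + 1 - i), D i x * D j y * D (n + 1 - i - j) z
        + D i x * D (n + 1 - i) y * D 0 z := by
    intro i hi
    rw [hLeib (n + 1 - i) (by grind), mul_sum, sum_range_succ, Nat.sub_self]
    simp only [mul_assoc]
  rw [cochain, sum_congr rfl expand, sum_add_distrib, cochain, sum_mul]
  rfl

end HochschildObstruction

open HochschildObstruction in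
theorem stmt8_general {k : Type*} [Field k] {A B : Type*}
    [Ring A] [Algebra k A] [Ring B] [Algebra k B]
    (n : ℕ) (D : ℕ → A →ₗ[k] B)
    (hLeib : ∀ i ≤ n, ∀ x y : A,
      D i (x * y) = ∑ j ∈ range (i + 1), D j x * D (i - j) y) :
    ∀ x y z : A,
      D 0 x * (∑ i ∈ Icc 1 n, D i y * D (n + 1 - i) z)
        - (∑ i ∈ Icc 1 n, D i (x * y) * D (n + 1 - i) z)
        + (∑ i ∈ Icc 1 n, D i x * D (n + 1 - i) (y * z))
        - (∑ i ∈ Icc 1 n, D i x * D (n + 1 - i) y) * D 0 z = 0 := by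
  intro x y z
  show D 0 x * cochain (D ·) n y z - cochain (D ·) n (x * y) z + cochain (D ·) n x (y * z)
    - cochain (D ·) n x y * D 0 z = 0
  rw [cochain_mul_left _ n hLeib, cochain_mul_right _ n hLeib]
  abel

/-- The cocycle verification in the proof of (i)⇒(ii) of Theorem 2.1: if the
maps `Dᵢ` satisfy the graded Leibniz identity up to degree `n`, then
`c(x, y) = Σ_{i=1}^{n} Dᵢ(x) D_{n+1−i}(y)` is a Hochschild 2-cocycle with
values in `B_{n+1}` (with bimodule structure induced by `u = D₀`). -/
theorem stmt8 {k : Type*} [Field k] {A B : Type*}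
    [Ring A] [Algebra k A] [Ring B] [Algebra k B]
    (𝒜 : ℕ → Submodule k B) [GradedRing 𝒜]
    (n : ℕ) (D : ℕ → A →ₗ[k] B) (hD : ∀ i (x : A), D i x ∈ 𝒜 i)
    (hLeib : ∀ i ≤ n, ∀ x y : A,
      D i (x * y) = ∑ j ∈ range (i + 1), D j x * D (i - j) y) :
    ∀ x y z : A,
      D 0 x * (∑ i ∈ Icc 1 n, D i y * D (n + 1 - i) z)
        - (∑ i ∈ Icc 1 n, D i (x * y) * D (n + 1 - i) z)
        + (∑ i ∈ Icc 1 n, D i x * D (n + 1 - i) (y * z))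
        - (∑ i ∈ Icc 1 n, D i x * D (n + 1 - i) y) * D 0 z = 0 :=
  stmt8_general n D hLeib
end
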